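/- arXiv:math/0608107 — 4 statements merged into one kernel-verified Lean document; each statement's English description precedes it below -/
import Mathlib

section
/- An infinite Hausdorff space X is k-Lindelöf if and only if (𝕂(X), V⁺) is ω-Lindelöf. -/
open Set Filter Pointwise

universe u

/-- The selection principle `S₁(𝒜,ℬ)`: for each sequence of elements of `𝒜` one can pick one
element from each term so that the set of chosen elements belongs to `ℬ`. -/
def S1 {Y : Type u} (cA cB : Set (Set Y)) : Prop :=
  ∀ A : ℕ → Set Y, (∀ n, A n ∈ cA) →
    ∃ b : ℕ → Y, (∀ n, b n ∈ A n) ∧ Set.range b ∈ cB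

/-- `α₁(𝒜,ℬ)`: for each sequence of infinite elements of `𝒜` there is `B ∈ ℬ` such that
`Aₙ \ B` is finite for each `n`. -/
def Alpha1 {Y : Type u} (cA cB : Set (Set Y)) : Prop :=
  ∀ A : ℕ → Set Y, (∀ n, A n ∈ cA ∧ (A n).Infinite) →
    ∃ B ∈ cB, ∀ n, (A n \ B).Finite

/-- `α₂(𝒜,ℬ)`: for each sequence of infinite elements of `𝒜` there is `B ∈ ℬ` such that
`Aₙ ∩ B` is infinite for each `n`. -/
def Alpha2 {Y : Type u} (cA cB : Set (Set Y)) : Prop :=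
  ∀ A : ℕ → Set Y, (∀ n, A n ∈ cA ∧ (A n).Infinite) →
    ∃ B ∈ cB, ∀ n, (A n ∩ B).Infinite

/-- `α₃(𝒜,ℬ)`: for each sequence of infinite elements of `𝒜` there is `B ∈ ℬ` such that
`Aₙ ∩ B` is infinite for infinitely many `n`. -/
def Alpha3 {Y : Type u} (cA cB : Set (Set Y)) : Prop :=
  ∀ A : ℕ → Set Y, (∀ n, A n ∈ cA ∧ (A n).Infinite) →
    ∃ B ∈ cB, {n : ℕ | (A n ∩ B).Infinite}.Infinite

/-- `α₄(𝒜,ℬ)`: for each sequence of infinite elements of `𝒜` there is `B ∈ ℬ` such that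
`Aₙ ∩ B` is nonempty for infinitely many `n`. -/
def Alpha4 {Y : Type u} (cA cB : Set (Set Y)) : Prop :=
  ∀ A : ℕ → Set Y, (∀ n, A n ∈ cA ∧ (A n).Infinite) →
    ∃ B ∈ cB, {n : ℕ | (A n ∩ B).Nonempty}.Infinite

/-- An ω-cover: a nontrivial open cover such that every finite set lies in some member. -/
def IsOmegaCover {Y : Type u} [TopologicalSpace Y] (cU : Set (Set Y)) : Prop :=
  (∀ U ∈ cU, IsOpen U) ∧ ⋃₀ cU = Set.univ ∧ Set.univ ∉ cU ∧
    ∀ F : Set Y, F.Finite → ∃ U ∈ cU, F ⊆ U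

/-- A k-cover: a nontrivial open cover such that every compact set lies in some member. -/
def IsKCover {Y : Type u} [TopologicalSpace Y] (cU : Set (Set Y)) : Prop :=
  (∀ U ∈ cU, IsOpen U) ∧ ⋃₀ cU = Set.univ ∧ Set.univ ∉ cU ∧
    ∀ K : Set Y, IsCompact K → ∃ U ∈ cU, K ⊆ U

/-- A γ-cover: an infinite open cover such that each finite set is contained in all but
finitely many members. -/
def IsGammaCover {Y : Type u} [TopologicalSpace Y] (cU : Set (Set Y)) : Prop :=
  (∀ U ∈ cU, IsOpen U) ∧ ⋃₀ cU = Set.univ ∧ cU.Infinite ∧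
    ∀ F : Set Y, F.Finite → {U ∈ cU | ¬ F ⊆ U}.Finite

/-- A γₖ-cover: an infinite open cover such that each compact set is contained in all but
finitely many members. -/
def IsGammaKCover {Y : Type u} [TopologicalSpace Y] (cU : Set (Set Y)) : Prop :=
  (∀ U ∈ cU, IsOpen U) ∧ ⋃₀ cU = Set.univ ∧ cU.Infinite ∧
    ∀ K : Set Y, IsCompact K → {U ∈ cU | ¬ K ⊆ U}.Finite

/-- `Ω`: the collection of ω-covers of `Y`. -/
def OmegaCovers (Y : Type u) [TopologicalSpace Y] : Set (Set (Set Y)) :=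
  {cU | IsOmegaCover cU}

/-- `𝒦`: the collection of k-covers of `Y`. -/
def KCovers (Y : Type u) [TopologicalSpace Y] : Set (Set (Set Y)) :=
  {cU | IsKCover cU}

/-- `Γ`: the collection of γ-covers of `Y`. -/
def GammaCovers (Y : Type u) [TopologicalSpace Y] : Set (Set (Set Y)) :=
  {cU | IsGammaCover cU}

/-- `Γₖ`: the collection of γₖ-covers of `Y`. -/
def GammaKCovers (Y : Type u) [TopologicalSpace Y] : Set (Set (Set Y)) :=
  {cU | IsGammaKCover cU}

/-- `Y` is ω-Lindelöf if every ω-cover contains a countable ω-cover. -/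
def OmegaLindelof (Y : Type u) [TopologicalSpace Y] : Prop :=
  ∀ cU : Set (Set Y), IsOmegaCover cU →
    ∃ cV ⊆ cU, cV.Countable ∧ IsOmegaCover cV

/-- `Y` is k-Lindelöf if every k-cover contains a countable k-cover. -/
def KLindelof (Y : Type u) [TopologicalSpace Y] : Prop :=
  ∀ cU : Set (Set Y), IsKCover cU →
    ∃ cV ⊆ cU, cV.Countable ∧ IsKCover cV

/-- `Ω_y`: subsets of `Y \ {y}` having `y` in their closure. -/
def OmegaPt {Y : Type u} [TopologicalSpace Y] (y : Y) : Set (Set Y) :=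
  {A | A ⊆ {y}ᶜ ∧ y ∈ closure A}

/-- `Σ_y`: (ranges of) nontrivial sequences in `Y` converging to `y`. -/
def SigmaPt {Y : Type u} [TopologicalSpace Y] (y : Y) : Set (Set Y) :=
  {S | ∃ f : ℕ → Y, (∀ n, f n ≠ y) ∧
    Filter.Tendsto f Filter.atTop (nhds y) ∧ S = Set.range f}

/-- `2^X`: the hyperspace of closed subsets of `X`. -/
abbrev HClosed (X : Type u) [TopologicalSpace X] : Type u := {F : Set X // IsClosed F}

/-- The upper Fell topology on `2^X`, generated by the base
`{(Kᶜ)⁺ : K nonempty compact} ∪ {univ}`. -/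
instance fellTopology (X : Type u) [TopologicalSpace X] : TopologicalSpace (HClosed X) :=
  TopologicalSpace.generateFrom
    ({S | ∃ K : Set X, IsCompact K ∧ K.Nonempty ∧ S = {F : HClosed X | F.1 ⊆ Kᶜ}} ∪
      {Set.univ})

/-- `𝕂(X)`: the hyperspace of nonempty compact subsets of `X`. -/
abbrev KSp (X : Type u) [TopologicalSpace X] : Type u := {K : Set X // IsCompact K ∧ K.Nonempty}

/-- The upper Vietoris topology on `𝕂(X)`, generated by the base of sets `U⁺`, `U` open. -/
instance upperVietorisK (X : Type u) [TopologicalSpace X] : TopologicalSpace (KSp X) :=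
  TopologicalSpace.generateFrom
    {S | ∃ U : Set X, IsOpen U ∧ S = {K : KSp X | K.1 ⊆ U}}

/-- `𝔽(X)`: the hyperspace of nonempty finite subsets of `X`. -/
abbrev FSp (X : Type u) [TopologicalSpace X] : Type u := {F : Set X // F.Finite ∧ F.Nonempty}

/-- The upper Vietoris topology on `𝔽(X)`, generated by the base of sets `U⁺`, `U` open. -/
instance upperVietorisF (X : Type u) [TopologicalSpace X] : TopologicalSpace (FSp X) :=
  TopologicalSpace.generateFrom
    {S | ∃ U : Set X, IsOpen U ∧ S = {F : FSp X | F.1 ⊆ U}}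

/-- For a topological group `G` with local base `Be` at the neutral element:
`Ω(e) = {ω(U) : U ∈ Be, no nonempty finite F with F·U = G}` where
`ω(U) = {F·U : F nonempty finite}`. -/
def OmegaE {G : Type u} [Group G] (Be : Set (Set G)) : Set (Set (Set G)) :=
  {cU | ∃ U ∈ Be,
    (¬ ∃ F : Set G, F.Finite ∧ F.Nonempty ∧ F * U = Set.univ) ∧
    cU = {V | ∃ F : Set G, F.Finite ∧ F.Nonempty ∧ V = F * U}}

/-- For a topological group `G` with local base `Be` at the neutral element:
`𝒦(e) = {k(U) : U ∈ Be, no nonempty compact K with K·U = G}` where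
`k(U) = {K·U : K nonempty compact}`. -/
def KcalE {G : Type u} [Group G] [TopologicalSpace G] (Be : Set (Set G)) :
    Set (Set (Set G)) :=
  {cU | ∃ U ∈ Be,
    (¬ ∃ K : Set G, IsCompact K ∧ K.Nonempty ∧ K * U = Set.univ) ∧
    cU = {V | ∃ K : Set G, IsCompact K ∧ K.Nonempty ∧ V = K * U}}

/-- Player ONE has a winning strategy in the game `G₁(𝒜,ℬ)`: a strategy assigns to each finite
sequence of TWO's previous moves a member of `𝒜`; it is winning if for every play in which
TWO's moves follow it, the set of TWO's moves is not in `ℬ`. -/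
def OneHasWinningStrategy {Y : Type u} (cA cB : Set (Set Y)) : Prop :=
  ∃ σ : List Y → Set Y, (∀ l : List Y, σ l ∈ cA) ∧
    ∀ b : ℕ → Y, (∀ n, b n ∈ σ (List.ofFn fun i : Fin n => b i)) → Set.range b ∉ cB


section Aux

variable {X : Type u} [TopologicalSpace X]

/-- `U⁺` for the hyperspace of compact sets. -/
def plusSet (U : Set X) : Set (KSp X) := {K | K.1 ⊆ U}

lemma plusSet_injective : Function.Injective (plusSet (X := X)) := by
  have key : ∀ U V : Set X, plusSet U = plusSet V → U ⊆ V := by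
    intro U V h x hx
    have hmem : (⟨{x}, isCompact_singleton, Set.singleton_nonempty x⟩ : KSp X) ∈ plusSet U := by
      simpa [plusSet] using hx
    rw [h] at hmem
    simpa [plusSet] using hmem
  intro U V h
  exact Set.Subset.antisymm (key U V h) (key V U h.symm)

lemma isOpen_plusSet {U : Set X} (hU : IsOpen U) : IsOpen (plusSet U) := by
  exact TopologicalSpace.GenerateOpen.basic _ ⟨U, hU, rfl⟩

lemma plus_basis {W : Set (KSp X)} (hW : IsOpen W) :
    ∀ K ∈ W, ∃ U : Set X, IsOpen U ∧ K.1 ⊆ U ∧ plusSet U ⊆ W := by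
  have hW' : TopologicalSpace.GenerateOpen
      {S | ∃ U : Set X, IsOpen U ∧ S = {K : KSp X | K.1 ⊆ U}} W := hW
  clear hW
  induction hW' with
  | basic S hS =>
      obtain ⟨U, hU, rfl⟩ := hS
      intro K hK
      exact ⟨U, hU, hK, fun _ h => h⟩
  | univ =>
      intro K _
      exact ⟨Set.univ, isOpen_univ, Set.subset_univ _, Set.subset_univ _⟩
  | inter S T _ _ ihS ihT =>
      intro K hK
      obtain ⟨U, hU, hKU, hUS⟩ := ihS K hK.1
      obtain ⟨V, hV, hKV, hVT⟩ := ihT K hK.2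
      refine ⟨U ∩ V, hU.inter hV, Set.subset_inter hKU hKV, fun k hk => ?_⟩
      exact ⟨hUS fun x hx => (hk hx).1, hVT fun x hx => (hk hx).2⟩
  | sUnion S _ ih =>
      intro K hK
      obtain ⟨T, hT, hKT⟩ := hK
      obtain ⟨U, hU, hKU, hUT⟩ := ih T hT K hKT
      exact ⟨U, hU, hKU, hUT.trans (Set.subset_sUnion_of_mem hT)⟩

end Aux

/-- Proposition: `X` is k-Lindelöf iff `(𝕂(X), V⁺)` is ω-Lindelöf. -/
theorem stmt11 (X : Type u) [TopologicalSpace X] [T2Space X] [Infinite X] :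
    KLindelof X ↔ OmegaLindelof (KSp X) := by
  have hX : Nonempty X := inferInstance
  obtain ⟨x0⟩ := hX
  have hKSp : Nonempty (KSp X) :=
    ⟨⟨{x0}, isCompact_singleton, Set.singleton_nonempty x0⟩⟩
  constructor
  · -- k-Lindelöf → ω-Lindelöf of KSp
    intro hk cW hcW
    obtain ⟨hWopen, hWcov, hWnuniv, hWfin⟩ := hcW
    -- k-cover of X from cW
    set cU : Set (Set X) :=
      {U | IsOpen U ∧ U ≠ Set.univ ∧ ∃ W ∈ cW, plusSet U ⊆ W} with hcUdef
    have hfind : ∀ K : KSp X, ∃ U ∈ cU, K.1 ⊆ U := by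
      intro K
      have hKmem : K ∈ ⋃₀ cW := by rw [hWcov]; trivial
      obtain ⟨W, hW, hKW⟩ := hKmem
      obtain ⟨U, hU, hKU, hUW⟩ := plus_basis (hWopen W hW) K hKW
      have hUne : U ≠ Set.univ := by
        rintro rfl
        apply hWnuniv
        have : W = Set.univ := by
          apply Set.eq_univ_of_univ_subset
          intro k _
          exact hUW (Set.subset_univ _)
        rwa [this] at hW
      exact ⟨U, ⟨hU, hUne, W, hW, hUW⟩, hKU⟩
    have hcU : IsKCover cU := by
      refine ⟨fun U hU => hU.1, ?_, ?_, ?_⟩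
      · apply Set.eq_univ_of_forall
        intro x
        obtain ⟨U, hU, hxU⟩ :=
          hfind ⟨{x}, isCompact_singleton, Set.singleton_nonempty x⟩
        exact ⟨U, hU, hxU rfl⟩
      · intro h; exact h.2.1 rfl
      · intro K hK
        rcases K.eq_empty_or_nonempty with rfl | hKne
        · obtain ⟨U, hU, _⟩ := hfind (Classical.arbitrary (KSp X))
          exact ⟨U, hU, Set.empty_subset _⟩
        · obtain ⟨U, hU, hKU⟩ := hfind ⟨K, hK, hKne⟩
          exact ⟨U, hU, hKU⟩
    obtain ⟨cU0, hcU0sub, hcU0cnt, hcU0⟩ := hk cU hcU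
    -- choose witnesses
    have hchoice : ∀ U : Set X, U ∈ cU0 → ∃ W ∈ cW, plusSet U ⊆ W := by
      intro U hU
      exact (hcU0sub hU).2.2
    classical
    set F : Set X → Set (KSp X) := fun U =>
      if h : ∃ W ∈ cW, plusSet U ⊆ W then h.choose else ∅ with hFdef
    have hF : ∀ U ∈ cU0, F U ∈ cW ∧ plusSet U ⊆ F U := by
      intro U hU
      have h := hchoice U hU
      have : F U = h.choose := dif_pos h
      rw [this]
      exact ⟨h.choose_spec.1, h.choose_spec.2⟩
    refine ⟨F '' cU0, ?_, hcU0cnt.image F, ?_, ?_, ?_, ?_⟩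
    · rintro W ⟨U, hU, rfl⟩; exact (hF U hU).1
    · rintro W ⟨U, hU, rfl⟩; exact hWopen _ (hF U hU).1
    · apply Set.eq_univ_of_forall
      intro K
      obtain ⟨U, hU, hKU⟩ := hcU0.2.2.2 K.1 K.2.1
      exact ⟨F U, ⟨U, hU, rfl⟩, (hF U hU).2 hKU⟩
    · rintro ⟨U, hU, hFU⟩
      apply hWnuniv
      rw [← hFU]
      exact (hF U hU).1
    · intro G hG
      have hcomp : IsCompact (⋃ k ∈ G, (k : KSp X).1) :=
        hG.isCompact_biUnion fun k _ => k.2.1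
      obtain ⟨U, hU, hGU⟩ := hcU0.2.2.2 _ hcomp
      refine ⟨F U, ⟨U, hU, rfl⟩, fun k hk => ?_⟩
      exact (hF U hU).2 ((Set.subset_biUnion_of_mem hk).trans hGU)
  · -- ω-Lindelöf of KSp → k-Lindelöf
    intro hω cU hcU
    obtain ⟨hUopen, hUcov, hUnuniv, hUk⟩ := hcU
    set cV : Set (Set (KSp X)) := plusSet '' cU with hcVdef
    have hcV : IsOmegaCover cV := by
      refine ⟨?_, ?_, ?_, ?_⟩
      · rintro V ⟨U, hU, rfl⟩; exact isOpen_plusSet (hUopen U hU)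
      · apply Set.eq_univ_of_forall
        intro K
        obtain ⟨U, hU, hKU⟩ := hUk K.1 K.2.1
        exact ⟨plusSet U, ⟨U, hU, rfl⟩, hKU⟩
      · rintro ⟨U, hU, hUuniv⟩
        have hUne : U ≠ Set.univ := fun h => hUnuniv (h ▸ hU)
        obtain ⟨x, hx⟩ := (Set.ne_univ_iff_exists_notMem U).mp hUne
        have : (⟨{x}, isCompact_singleton, Set.singleton_nonempty x⟩ : KSp X)
            ∈ plusSet U := hUuniv ▸ Set.mem_univ _
        exact hx (this rfl)
      · intro G hG
        have hcomp : IsCompact (⋃ k ∈ G, (k : KSp X).1) :=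
          hG.isCompact_biUnion fun k _ => k.2.1
        obtain ⟨U, hU, hGU⟩ := hUk _ hcomp
        refine ⟨plusSet U, ⟨U, hU, rfl⟩, fun k hk => ?_⟩
        exact (Set.subset_biUnion_of_mem hk).trans hGU
    obtain ⟨cV0, hcV0sub, hcV0cnt, hcV0⟩ := hω cV hcV
    set cU0 : Set (Set X) := cU ∩ plusSet ⁻¹' cV0 with hcU0def
    have hmemV : ∀ V ∈ cV0, ∃ U ∈ cU0, plusSet U = V := by
      intro V hV
      obtain ⟨U, hU, rfl⟩ := hcV0sub hV
      exact ⟨U, ⟨hU, hV⟩, rfl⟩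
    refine ⟨cU0, Set.inter_subset_left, ?_, ?_, ?_, ?_, ?_⟩
    · exact (hcV0cnt.preimage plusSet_injective).mono Set.inter_subset_right
    · exact fun U hU => hUopen U hU.1
    · apply Set.eq_univ_of_forall
      intro x
      have hmem : (⟨{x}, isCompact_singleton, Set.singleton_nonempty x⟩ : KSp X)
          ∈ ⋃₀ cV0 := by rw [hcV0.2.1]; trivial
      obtain ⟨V, hV, hKV⟩ := hmem
      obtain ⟨U, hU, rfl⟩ := hmemV V hV
      exact ⟨U, hU, hKV rfl⟩
    · intro h; exact hUnuniv h.1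
    · intro K hK
      rcases K.eq_empty_or_nonempty with rfl | hKne
      · have hne : cV0.Nonempty := by
          have : (Classical.arbitrary (KSp X)) ∈ ⋃₀ cV0 := by
            rw [hcV0.2.1]; trivial
          obtain ⟨V, hV, _⟩ := this
          exact ⟨V, hV⟩
        obtain ⟨V, hV⟩ := hne
        obtain ⟨U, hU, _⟩ := hmemV V hV
        exact ⟨U, hU, Set.empty_subset _⟩
      · have hmem : (⟨K, hK, hKne⟩ : KSp X) ∈ ⋃₀ cV0 := by
          rw [hcV0.2.1]; trivial
        obtain ⟨V, hV, hKV⟩ := hmem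
        obtain ⟨U, hU, rfl⟩ := hmemV V hV
        exact ⟨U, hU, hKV⟩
end

section
/- Let X be an infinite Hausdorff k-Lindelöf space. Then the following are equivalent: (1) (𝕂(X), V⁺) satisfies α₂(Ω,Γ); (2) (𝕂(X), V⁺) satisfies α₃(Ω,Γ); (3) (𝕂(X), V⁺) satisfies α₄(Ω,Γ); (4) (𝕂(X), V⁺) satisfies S₁(Ω,Γ); (5) X satisfies S₁(𝒦,Γₖ). -/
open Set Filter Pointwise

universe u

/-!
(1) ⇒ (2) ⇒ (3) and (4) ⇒ (3) are formal.

(5) ⇒ (1), (4): an ω-cover `𝒜` of `𝕂(X)` induces the k-cover `{U open : U⁺ ⊆ A for some A ∈ 𝒜}`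
of `X`. Selecting from the k-covers `𝒲ₙ` of open sets refining each of `𝒰₀, …, 𝒰ₙ` and passing
to a subsequence of distinct selected sets, `S₁(𝒦,Γₖ)` yields selections `Uₙ ∈ 𝒰ₙ` such that every
compact set lies in `Uₙ` for all large `n`; lifted back to the ω-covers, every finite subset of
`𝕂(X)` then lies in all but finitely many selected members.

(3) ⇒ (5): `α₄`, applied to the ω-covers `{U⁺ : U ∈ 𝒞 \ s}` (`s` finite) of a countable k-subcover
`𝒞`, extracts a γₖ-subcover from every k-cover of `X`. Given k-covers `𝒰ₙ`, call `W` a core if it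
lies in `⋂ₙ 𝒲ₙ`. If the cores form a k-cover, enumerate a γₖ-subcover of it. Otherwise the
non-cores in `𝒲ₙ` form k-covers, and a fixed set is a non-core member of `𝒲ₙ` for only finitely
many `n`; so `α₄`, applied to the induced ω-covers of `𝕂(X)`, produces `Wₖ ∈ 𝒲_{φ k}`, `φ k ≥ k`,
whose `⁺`-sets lie in one γ-cover, and these eventually contain every compact set.
-/

open Function TopologicalSpace

section Sequences

variable {α : Type*}

theorem exists_strictMono_injective_comp {f : ℕ → α} (hf : (range f).Infinite) :
    ∃ φ : ℕ → ℕ, StrictMono φ ∧ Injective (f ∘ φ) := by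
  classical
  set F : Set ℕ := {n | ∀ m < n, f m ≠ f n}
  have hF : F.Infinite := by
    refine fun hfin => hf ((hfin.image f).subset ?_)
    rintro _ ⟨n, rfl⟩
    have hex : ∃ m, f m = f n := ⟨n, rfl⟩
    exact ⟨Nat.find hex, fun m hm h => Nat.find_min hex hm (h.trans (Nat.find_spec hex)),
      Nat.find_spec hex⟩
  refine ⟨Nat.nth (· ∈ F), Nat.nth_strictMono hF, fun a b hab => ?_⟩
  by_contra hne
  rcases lt_or_gt_of_ne hne with h | h
  · exact Nat.nth_mem_of_infinite hF b _ (Nat.nth_strictMono hF h) hab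
  · exact Nat.nth_mem_of_infinite hF a _ (Nat.nth_strictMono hF h) hab.symm

theorem eventually_atTop_of_injective {s : Set α} {p : α → Prop} (hs : {a ∈ s | ¬ p a}.Finite)
    {e : ℕ → α} (he : Injective e) (hes : ∀ n, e n ∈ s) : ∀ᶠ n in atTop, p (e n) := by
  rw [← Nat.cofinite_eq_atTop]
  filter_upwards [he.tendsto_cofinite.eventually hs.eventually_cofinite_notMem] with n hn
  by_contra h
  exact hn ⟨hes n, h⟩

theorem Antitone.eventually_notMem_diff_iInter {s : ℕ → Set α} (hs : Antitone s) (a : α) :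
    ∀ᶠ n in atTop, a ∉ s n \ ⋂ m, s m := by
  by_cases ha : a ∈ ⋂ m, s m
  · exact Eventually.of_forall fun n h => h.2 ha
  · obtain ⟨m, hm⟩ : ∃ m, a ∉ s m := by simpa using ha
    filter_upwards [eventually_ge_atTop m] with n hn h
    exact hm (hs hn h.1)

theorem finite_setOf_mem_range_not_subset {b : ℕ → Set α} {s : Set α}
    (h : ∀ᶠ n in atTop, s ⊆ b n) : {U ∈ range b | ¬ s ⊆ U}.Finite := by
  obtain ⟨N, hN⟩ := eventually_atTop.1 h
  refine ((finite_Iio N).image b).subset ?_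
  rintro _ ⟨⟨n, rfl⟩, hn⟩
  exact ⟨n, mem_Iio.2 (lt_of_not_ge fun h => hn (hN n h)), rfl⟩

theorem infinite_image_of_eventually_mem {b : ℕ → Set α} (hne : ∀ n, b n ≠ univ)
    (h : ∀ a, ∀ᶠ n in atTop, a ∈ b n) {M : Set ℕ} (hM : M.Infinite) : (b '' M).Infinite := by
  intro hfin
  have hev : ∀ᶠ n in atTop, ∀ U ∈ b '' M, ¬ b n ⊆ U := by
    refine hfin.eventually_all.2 fun U ⟨m, _, hU⟩ => ?_
    obtain ⟨a, ha⟩ := (ne_univ_iff_exists_notMem U).1 (hU ▸ hne m)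
    exact (h a).mono fun n han hsub => ha (hsub han)
  obtain ⟨n, hnM, hn⟩ := ((Nat.frequently_atTop_iff_infinite.2 hM).and_eventually hev).exists
  exact hn _ (mem_image_of_mem b hnM) subset_rfl

end Sequences

section Covers

variable {Y : Type u} [TopologicalSpace Y]

theorem isKCover_of_forall_isCompact {𝒰 : Set (Set Y)} (hopen : ∀ U ∈ 𝒰, IsOpen U)
    (huniv : univ ∉ 𝒰) (hK : ∀ K : Set Y, IsCompact K → ∃ U ∈ 𝒰, K ⊆ U) : IsKCover 𝒰 := by
  refine ⟨hopen, eq_univ_of_forall fun y => ?_, huniv, hK⟩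
  obtain ⟨U, hU, hyU⟩ := hK {y} isCompact_singleton
  exact ⟨U, hU, hyU rfl⟩

theorem IsKCover.diff_finite {𝒰 s : Set (Set Y)} (h : IsKCover 𝒰) (hs : s.Finite) :
    IsKCover (𝒰 \ s) := by
  refine isKCover_of_forall_isCompact (fun U hU => h.1 U hU.1) (fun hu => h.2.2.1 hu.1)
    fun K hK => ?_
  -- enlarge `K` by a point outside each member of `𝒰 ∩ s`
  have hout : ∀ U : ↥(𝒰 ∩ s), ∃ y, y ∉ (U : Set Y) := fun U =>
    (ne_univ_iff_exists_notMem _).1 fun hU => h.2.2.1 (hU ▸ U.2.1)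
  choose y hy using hout
  have : Finite ↥(𝒰 ∩ s) := (hs.inter_of_right 𝒰).to_subtype
  obtain ⟨V, hV, hKV⟩ := h.2.2.2 (K ∪ range y) (hK.union (finite_range y).isCompact)
  exact ⟨V, ⟨hV, fun hVs => hy ⟨V, hV, hVs⟩ (hKV (Or.inr ⟨_, rfl⟩))⟩,
    subset_union_left.trans hKV⟩

theorem IsGammaCover.subset {B H : Set (Set Y)} (hB : IsGammaCover B) (hHB : H ⊆ B)
    (hH : H.Infinite) : IsGammaCover H := by
  obtain ⟨hopen, -, -, hγ⟩ := hB
  refine ⟨fun U hU => hopen U (hHB hU), eq_univ_of_forall fun y => ?_, hH,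
    fun F hF => (hγ F hF).subset fun U hU => ⟨hHB hU.1, hU.2⟩⟩
  obtain ⟨U, hUH, hyU⟩ := (hH.sdiff (hγ {y} (finite_singleton y))).nonempty
  exact ⟨U, hUH, by_contra fun hy => hyU ⟨hHB hUH, fun h => hy (h rfl)⟩⟩

theorem IsGammaKCover.isKCover {G : Set (Set Y)} (h : IsGammaKCover G) (hu : univ ∉ G) :
    IsKCover G := by
  refine ⟨h.1, h.2.1, hu, fun K hK => ?_⟩
  obtain ⟨U, hUG, hKU⟩ := (h.2.2.1.sdiff (h.2.2.2 K hK)).nonempty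
  exact ⟨U, hUG, by_contra fun h => hKU ⟨hUG, h⟩⟩

theorem isGammaCover_range_of_eventually_subset {b : ℕ → Set Y} (hopen : ∀ n, IsOpen (b n))
    (hne : ∀ n, b n ≠ univ) (h : ∀ F : Set Y, F.Finite → ∀ᶠ n in atTop, F ⊆ b n) :
    IsGammaCover (range b) := by
  have hmem : ∀ y, ∀ᶠ n in atTop, y ∈ b n := fun y =>
    (h {y} (finite_singleton y)).mono fun _ => singleton_subset_iff.1
  refine ⟨forall_mem_range.2 hopen, eq_univ_of_forall fun y => ?_, ?_,
    fun F hF => finite_setOf_mem_range_not_subset (h F hF)⟩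
  · obtain ⟨n, hn⟩ := (hmem y).exists
    exact ⟨b n, mem_range_self n, hn⟩
  · simpa only [image_univ] using infinite_image_of_eventually_mem hne hmem infinite_univ

def IsGammaKSeq (b : ℕ → Set Y) : Prop :=
  ∀ K : Set Y, IsCompact K → ∀ᶠ n in atTop, K ⊆ b n

theorem IsGammaKSeq.isGammaKCover_range {b : ℕ → Set Y} (hb : IsGammaKSeq b)
    (hopen : ∀ n, IsOpen (b n)) (hne : ∀ n, b n ≠ univ) : IsGammaKCover (range b) := by
  obtain ⟨hopen', hcov, hinf, -⟩ :=
    isGammaCover_range_of_eventually_subset hopen hne fun F hF => hb F hF.isCompact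
  exact ⟨hopen', hcov, hinf, fun K hK => finite_setOf_mem_range_not_subset (hb K hK)⟩

theorem Alpha4.exists_isGammaCover_subset (h : Alpha4 (OmegaCovers Y) (GammaCovers Y))
    {𝒟 : Set (Set Y)} (hc : 𝒟.Countable) (hω : ∀ s, s.Finite → IsOmegaCover (𝒟 \ s)) :
    ∃ 𝒢 ⊆ 𝒟, IsGammaCover 𝒢 := by
  have hinf : ∀ s : Set (Set Y), s.Finite → (𝒟 \ s).Infinite := fun s hs hfin => by
    obtain ⟨U, hU, -⟩ := (hω _ (hs.union hfin)).2.2.2 ∅ finite_empty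
    exact hU.2 (Or.inr ⟨hU.1, fun h => hU.2 (Or.inl h)⟩)
  obtain ⟨f, rfl⟩ := hc.exists_eq_range (by simpa using (hinf ∅ finite_empty).nonempty)
  obtain ⟨B, hB, hfreq⟩ := h (fun n => range f \ f '' Iio n) fun n =>
    ⟨hω _ ((finite_Iio n).image f), hinf _ ((finite_Iio n).image f)⟩
  refine ⟨range f ∩ B, inter_subset_left, IsGammaCover.subset hB inter_subset_right ?_⟩
  intro hfin
  have hev : ∀ᶠ n in atTop, ∀ U ∈ range f ∩ B, U ∈ f '' Iio n :=
    hfin.eventually_all.2 fun U ⟨⟨i, hi⟩, _⟩ =>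
      (eventually_gt_atTop i).mono fun n hn => ⟨i, hn, hi⟩
  obtain ⟨n, ⟨U, ⟨hUf, hUn⟩, hUB⟩, hn⟩ :=
    ((Nat.frequently_atTop_iff_infinite.2 hfreq).and_eventually hev).exists
  exact hUn (hn U ⟨hUf, hUB⟩)

end Covers

namespace KSp

variable {X : Type u} [TopologicalSpace X]

def plus (U : Set X) : Set (KSp X) := {K | K.1 ⊆ U}

theorem plus_univ : plus (univ : Set X) = univ :=
  eq_univ_of_forall fun K => subset_univ K.1

theorem plus_injective : Injective (plus (X := X)) := by
  intro U V h
  ext x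
  have hx : ∀ W : Set X, (⟨{x}, isCompact_singleton, singleton_nonempty x⟩ : KSp X) ∈ plus W ↔
      x ∈ W := fun W => singleton_subset_iff
  rw [← hx U, ← hx V, h]

theorem isTopologicalBasis_plus : IsTopologicalBasis (plus '' {U : Set X | IsOpen U}) := by
  have hgen : upperVietorisK X = generateFrom (plus '' {U : Set X | IsOpen U}) :=
    congrArg generateFrom <| ext fun _ =>
      ⟨fun ⟨U, hU, hS⟩ => ⟨U, hU, hS.symm⟩, fun ⟨U, hU, hS⟩ => ⟨U, hU, hS.symm⟩⟩
  have hinter := isTopologicalBasis_of_subbasis_of_inter hgen (by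
    rintro _ ⟨U, hU, rfl⟩ _ ⟨V, hV, rfl⟩
    exact ⟨U ∩ V, hU.inter hV, by ext; simp [plus]⟩)
  have huniv : univ ∈ plus '' {U : Set X | IsOpen U} := ⟨univ, isOpen_univ, plus_univ⟩
  rwa [insert_eq_of_mem huniv] at hinter

theorem exists_plus_subset {A : Set (KSp X)} (hA : IsOpen A) {K : KSp X} (hK : K ∈ A) :
    ∃ U, IsOpen U ∧ K.1 ⊆ U ∧ plus U ⊆ A := by
  obtain ⟨_, ⟨U, hU, rfl⟩, hKU, hUA⟩ := isTopologicalBasis_plus.exists_subset_of_mem_open hK hA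
  exact ⟨U, hU, hKU, hUA⟩

end KSp

section UpperVietoris

variable {X : Type u} [TopologicalSpace X]

open KSp

theorem IsKCover.isOmegaCover_image_plus {𝒰 : Set (Set X)} (h : IsKCover 𝒰) :
    IsOmegaCover (plus '' 𝒰) := by
  refine ⟨?_, eq_univ_of_forall fun K => ?_, ?_, fun F hF => ?_⟩
  · rintro _ ⟨U, hU, rfl⟩
    exact GenerateOpen.basic _ ⟨U, h.1 U hU, rfl⟩
  · obtain ⟨U, hU, hKU⟩ := h.2.2.2 K.1 K.2.1
    exact ⟨plus U, mem_image_of_mem _ hU, hKU⟩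
  · rintro ⟨U, hU, hUeq⟩
    exact h.2.2.1 (plus_injective (hUeq.trans plus_univ.symm) ▸ hU)
  · obtain ⟨U, hU, hFU⟩ := h.2.2.2 _ (hF.isCompact_biUnion fun K _ => K.2.1)
    exact ⟨plus U, mem_image_of_mem _ hU, fun K hK => (subset_biUnion_of_mem hK).trans hFU⟩

theorem isGammaKCover_of_isGammaCover_image_plus {G : Set (Set X)} (hopen : ∀ U ∈ G, IsOpen U)
    (h : IsGammaCover (plus '' G)) : IsGammaKCover G := by
  obtain ⟨-, hcov, hinf, hγ⟩ := h
  refine ⟨hopen, eq_univ_of_forall fun x => ?_, fun hfin => hinf (hfin.image plus),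
    fun K hK => ?_⟩
  · obtain ⟨_, ⟨U, hUG, rfl⟩, hx⟩ := mem_sUnion.1 (hcov.symm ▸ mem_univ
      (⟨{x}, isCompact_singleton, singleton_nonempty x⟩ : KSp X))
    exact ⟨U, hUG, hx rfl⟩
  rcases K.eq_empty_or_nonempty with rfl | hKne
  · simp
  refine Finite.of_finite_image ((hγ {⟨K, hK, hKne⟩} (finite_singleton _)).subset ?_)
    plus_injective.injOn
  rintro _ ⟨U, ⟨hUG, hKU⟩, rfl⟩
  exact ⟨mem_image_of_mem _ hUG, fun h => hKU (singleton_subset_iff.1 h)⟩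

theorem exists_isGammaKCover_subset (h : Alpha4 (OmegaCovers (KSp X)) (GammaCovers (KSp X)))
    (hL : KLindelof X) {𝒰 : Set (Set X)} (h𝒰 : IsKCover 𝒰) : ∃ G ⊆ 𝒰, IsGammaKCover G := by
  obtain ⟨𝒞, h𝒞𝒰, h𝒞c, h𝒞⟩ := hL 𝒰 h𝒰
  obtain ⟨𝒢, h𝒢, hγ⟩ := h.exists_isGammaCover_subset (h𝒞c.image plus) fun s hs => by
    rw [← image_sdiff_preimage]
    exact (h𝒞.diff_finite (hs.preimage plus_injective.injOn)).isOmegaCover_image_plus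
  refine ⟨𝒞 ∩ plus ⁻¹' 𝒢, fun U hU => h𝒞𝒰 hU.1,
    isGammaKCover_of_isGammaCover_image_plus (fun U hU => h𝒞.1 U hU.1) ?_⟩
  rwa [image_inter_preimage, inter_eq_right.2 h𝒢]

end UpperVietoris

section Refinement

variable {X : Type u} [TopologicalSpace X]

def refinementUpTo (𝒰 : ℕ → Set (Set X)) (n : ℕ) : Set (Set X) :=
  {W | IsOpen W ∧ ∀ k ≤ n, ∃ V ∈ 𝒰 k, W ⊆ V}

theorem antitone_refinementUpTo (𝒰 : ℕ → Set (Set X)) : Antitone (refinementUpTo 𝒰) :=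
  fun _ _ hmn _ hW => ⟨hW.1, fun k hk => hW.2 k (hk.trans hmn)⟩

theorem isKCover_refinementUpTo {𝒰 : ℕ → Set (Set X)} (h𝒰 : ∀ n, IsKCover (𝒰 n)) (n : ℕ) :
    IsKCover (refinementUpTo 𝒰 n) := by
  refine isKCover_of_forall_isCompact (fun W hW => hW.1) (fun hu => ?_) fun K hK => ?_
  · obtain ⟨V, hV, hUV⟩ := hu.2 0 (Nat.zero_le n)
    exact (h𝒰 0).2.2.1 (univ_subset_iff.1 hUV ▸ hV)
  · choose V hV hKV using fun k => (h𝒰 k).2.2.2 K hK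
    exact ⟨⋂ k ∈ Iic n, V k,
      ⟨(finite_Iic n).isOpen_biInter fun k _ => (h𝒰 k).1 _ (hV k),
        fun k hk => ⟨V k, hV k, biInter_subset_of_mem hk⟩⟩,
      subset_iInter₂ fun k _ => hKV k⟩

theorem exists_selection_of_refinementUpTo {𝒰 : ℕ → Set (Set X)} {E : ℕ → Set X}
    (hE : ∀ n, E n ∈ refinementUpTo 𝒰 n) (hEγ : IsGammaKSeq E) :
    ∃ b : ℕ → Set X, (∀ n, b n ∈ 𝒰 n) ∧ IsGammaKSeq b := by
  choose b hb hEb using fun n => (hE n).2 n le_rfl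
  exact ⟨b, hb, fun K hK => (hEγ K hK).mono fun n hn => hn.trans (hEb n)⟩

theorem s1_kCovers_gammaKCovers_iff :
    S1 (KCovers X) (GammaKCovers X) ↔ ∀ 𝒰 : ℕ → Set (Set X), (∀ n, IsKCover (𝒰 n)) →
      ∃ b : ℕ → Set X, (∀ n, b n ∈ 𝒰 n) ∧ IsGammaKSeq b := by
  constructor
  · intro h 𝒰 h𝒰
    obtain ⟨W, hW, hWγ⟩ : ∃ W : ℕ → Set X, (∀ n, W n ∈ refinementUpTo 𝒰 n) ∧
        IsGammaKCover (range W) := h _ (isKCover_refinementUpTo h𝒰)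
    obtain ⟨φ, hφ, hinj⟩ := exists_strictMono_injective_comp hWγ.2.2.1
    refine exists_selection_of_refinementUpTo (E := W ∘ φ)
      (fun n => antitone_refinementUpTo 𝒰 (hφ.id_le n) (hW (φ n))) fun K hK => ?_
    exact eventually_atTop_of_injective (hWγ.2.2.2 K hK) hinj fun n => mem_range_self _
  · intro h 𝒰 h𝒰
    obtain ⟨b, hb, hbγ⟩ := h 𝒰 h𝒰
    exact ⟨b, hb, hbγ.isGammaKCover_range (fun n => (h𝒰 n).1 _ (hb n))
      fun n hn => (h𝒰 n).2.2.1 (hn ▸ hb n)⟩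

end Refinement

section Alpha4

variable {X : Type u} [TopologicalSpace X] {𝒰 : ℕ → Set (Set X)}
  (h : Alpha4 (OmegaCovers (KSp X)) (GammaCovers (KSp X))) (hL : KLindelof X)
  (h𝒰 : ∀ n, IsKCover (𝒰 n))

include h hL h𝒰

theorem exists_gammaKSeq_of_isKCover_iInter
    (hcore : ∀ K : Set X, IsCompact K → ∃ W ∈ ⋂ n, refinementUpTo 𝒰 n, K ⊆ W) :
    ∃ E : ℕ → Set X, (∀ n, E n ∈ refinementUpTo 𝒰 n) ∧ IsGammaKSeq E := by
  have hk : IsKCover (⋂ n, refinementUpTo 𝒰 n) :=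
    isKCover_of_forall_isCompact (fun W hW => (mem_iInter.1 hW 0).1)
      (fun hu => (isKCover_refinementUpTo h𝒰 0).2.2.1 (mem_iInter.1 hu 0)) hcore
  obtain ⟨G, hG, hGγ⟩ := exists_isGammaKCover_subset h hL hk
  let E := hGγ.2.2.1.natEmbedding
  exact ⟨fun n => E n, fun n => mem_iInter.1 (hG (E n).2) n, fun K hK =>
    eventually_atTop_of_injective (hGγ.2.2.2 K hK) (Subtype.val_injective.comp E.injective)
      fun n => (E n).2⟩

theorem exists_gammaKSeq_of_not_isKCover_iInter {K₀ : Set X} (hK₀ : IsCompact K₀)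
    (hK₀core : ∀ W ∈ ⋂ n, refinementUpTo 𝒰 n, ¬ K₀ ⊆ W) :
    ∃ E : ℕ → Set X, (∀ n, E n ∈ refinementUpTo 𝒰 n) ∧ IsGammaKSeq E := by
  set 𝒲 := refinementUpTo 𝒰
  have h𝒯 : ∀ n, IsKCover (𝒲 n \ ⋂ m, 𝒲 m) := fun n => by
    refine isKCover_of_forall_isCompact (fun W hW => hW.1.1)
      (fun hu => (isKCover_refinementUpTo h𝒰 n).2.2.1 hu.1) fun K hK => ?_
    obtain ⟨W, hW, hKW⟩ := (isKCover_refinementUpTo h𝒰 n).2.2.2 _ (hK.union hK₀)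
    exact ⟨W, ⟨hW, fun hWc => hK₀core W hWc (subset_union_right.trans hKW)⟩,
      subset_union_left.trans hKW⟩
  choose G hG hGγ using fun n => exists_isGammaKCover_subset h hL (h𝒯 n)
  have hGk : ∀ n, IsKCover (G n) := fun n =>
    (hGγ n).isKCover fun hu => (h𝒯 n).2.2.1 (hG n hu)
  obtain ⟨B, hB, hfreq⟩ := h (fun n => KSp.plus '' G n) fun n =>
    ⟨(hGk n).isOmegaCover_image_plus, (hGγ n).2.2.1.image KSp.plus_injective.injOn⟩
  have hB' : IsGammaCover B := hB
  have hsel : ∀ k, ∃ n, k ≤ n ∧ ∃ W ∈ G n, KSp.plus W ∈ B := fun k => by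
    obtain ⟨n, ⟨_, ⟨W, hW, rfl⟩, hWB⟩, hkn⟩ := hfreq.exists_gt k
    exact ⟨n, hkn.le, W, hW, hWB⟩
  choose φ hφ E hEG hEB using hsel
  refine ⟨E, fun k => antitone_refinementUpTo 𝒰 (hφ k) (hG _ (hEG k)).1, fun K hK => ?_⟩
  rcases K.eq_empty_or_nonempty with rfl | hKne
  · exact Eventually.of_forall fun _ => empty_subset _
  have hbad : {U | KSp.plus U ∈ B ∧ ¬ K ⊆ U}.Finite := by
    refine Finite.of_finite_image ((hB'.2.2.2 {⟨K, hK, hKne⟩} (finite_singleton _)).subset ?_)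
      KSp.plus_injective.injOn
    rintro _ ⟨U, ⟨hUB, hKU⟩, rfl⟩
    exact ⟨hUB, fun h => hKU (singleton_subset_iff.1 h)⟩
  have hev := (tendsto_atTop_mono hφ tendsto_id).eventually (hbad.eventually_all.2
    fun U _ => (antitone_refinementUpTo 𝒰).eventually_notMem_diff_iInter U)
  filter_upwards [hev] with k hk
  by_contra hKE
  exact hk (E k) ⟨hEB k, hKE⟩ (hG _ (hEG k))

end Alpha4

section

variable {X : Type u} [TopologicalSpace X]

theorem s1_kCovers_gammaKCovers_of_alpha4
    (h : Alpha4 (OmegaCovers (KSp X)) (GammaCovers (KSp X))) (hL : KLindelof X) :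
    S1 (KCovers X) (GammaKCovers X) := by
  refine s1_kCovers_gammaKCovers_iff.2 fun 𝒰 h𝒰 => ?_
  suffices ∃ E : ℕ → Set X, (∀ n, E n ∈ refinementUpTo 𝒰 n) ∧ IsGammaKSeq E by
    obtain ⟨E, hE, hEγ⟩ := this
    exact exists_selection_of_refinementUpTo hE hEγ
  by_cases hcore : ∀ K : Set X, IsCompact K → ∃ W ∈ ⋂ n, refinementUpTo 𝒰 n, K ⊆ W
  · exact exists_gammaKSeq_of_isKCover_iInter h hL h𝒰 hcore
  · push Not at hcore
    obtain ⟨K₀, hK₀, hK₀core⟩ := hcore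
    exact exists_gammaKSeq_of_not_isKCover_iInter h hL h𝒰 hK₀ hK₀core

theorem exists_eventually_subset_of_s1 (h : S1 (KCovers X) (GammaKCovers X))
    {𝒜 : ℕ → Set (Set (KSp X))} (h𝒜 : ∀ m, IsOmegaCover (𝒜 m)) :
    ∃ A : ℕ → Set (KSp X), (∀ m, A m ∈ 𝒜 m) ∧
      ∀ F : Set (KSp X), F.Finite → ∀ᶠ m in atTop, F ⊆ A m := by
  obtain ⟨x₀⟩ : Nonempty X := by
    obtain ⟨C, hC, -⟩ := (h𝒜 0).2.2.2 ∅ finite_empty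
    obtain ⟨P, -⟩ := (ne_univ_iff_exists_notMem C).1 fun hCu => (h𝒜 0).2.2.1 (hCu ▸ hC)
    exact ⟨P.2.2.some⟩
  set 𝒰 : ℕ → Set (Set X) := fun m => {U | IsOpen U ∧ ∃ C ∈ 𝒜 m, KSp.plus U ⊆ C}
  have h𝒰 : ∀ m, IsKCover (𝒰 m) := fun m => by
    refine isKCover_of_forall_isCompact (fun U hU => hU.1)
      (fun ⟨_, C, hC, hUC⟩ => (h𝒜 m).2.2.1 ?_) fun K hK => ?_
    · rw [KSp.plus_univ, univ_subset_iff] at hUC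
      exact hUC ▸ hC
    · obtain ⟨C, hC, hKC⟩ := mem_sUnion.1 ((h𝒜 m).2.1.symm ▸ mem_univ
        (⟨K ∪ {x₀}, hK.union isCompact_singleton, union_nonempty.2 (Or.inr
          (singleton_nonempty x₀))⟩ : KSp X))
      obtain ⟨U, hU, hKU, hUC⟩ := KSp.exists_plus_subset ((h𝒜 m).1 C hC) hKC
      exact ⟨U, ⟨hU, C, hC, hUC⟩, subset_union_left.trans hKU⟩
  obtain ⟨U, hU, hUγ⟩ := s1_kCovers_gammaKCovers_iff.1 h 𝒰 h𝒰
  choose A hA hUA using fun m => (hU m).2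
  refine ⟨A, hA, fun F hF => ?_⟩
  filter_upwards [hUγ _ (hF.isCompact_biUnion fun K _ => K.2.1)] with m hm K hK
  exact hUA m ((subset_biUnion_of_mem hK).trans hm)

theorem exists_isGammaCover_range_of_s1 (h : S1 (KCovers X) (GammaKCovers X))
    {𝒜 : ℕ → Set (Set (KSp X))} (h𝒜 : ∀ m, IsOmegaCover (𝒜 m)) :
    ∃ A : ℕ → Set (KSp X), (∀ m, A m ∈ 𝒜 m) ∧ IsGammaCover (range A) ∧
      ∀ M : Set ℕ, M.Infinite → (A '' M).Infinite := by
  obtain ⟨A, hA, hev⟩ := exists_eventually_subset_of_s1 h h𝒜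
  have hne : ∀ m, A m ≠ univ := fun m hm => (h𝒜 m).2.2.1 (hm ▸ hA m)
  exact ⟨A, hA, isGammaCover_range_of_eventually_subset (fun m => (h𝒜 m).1 _ (hA m)) hne hev,
    fun M => infinite_image_of_eventually_mem hne fun P =>
      (hev {P} (finite_singleton P)).mono fun _ => singleton_subset_iff.1⟩

end

theorem stmt13_general (X : Type u) [TopologicalSpace X] (hL : KLindelof X) :
    [Alpha2 (OmegaCovers (KSp X)) (GammaCovers (KSp X)),
     Alpha3 (OmegaCovers (KSp X)) (GammaCovers (KSp X)),
     Alpha4 (OmegaCovers (KSp X)) (GammaCovers (KSp X)),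
     S1 (OmegaCovers (KSp X)) (GammaCovers (KSp X)),
     S1 (KCovers X) (GammaKCovers X)].TFAE := by
  tfae_have 1 → 2 := fun h A hA => by
    obtain ⟨B, hB, hAB⟩ := h A hA
    exact ⟨B, hB, by simpa only [hAB, ofPred_true] using infinite_univ⟩
  tfae_have 2 → 3 := fun h A hA => by
    obtain ⟨B, hB, hAB⟩ := h A hA
    exact ⟨B, hB, hAB.mono fun n hn => hn.nonempty⟩
  tfae_have 4 → 3 := fun h A hA => by
    obtain ⟨b, hb, hB⟩ := h A fun n => (hA n).1
    exact ⟨range b, hB, by simpa only [fun n => show (A n ∩ range b).Nonempty from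
      ⟨b n, hb n, mem_range_self n⟩, ofPred_true] using infinite_univ⟩
  tfae_have 3 → 5 := fun h => s1_kCovers_gammaKCovers_of_alpha4 h hL
  tfae_have 5 → 4 := fun h A hA => by
    obtain ⟨C, hC, hγ, -⟩ := exists_isGammaCover_range_of_s1 h hA
    exact ⟨C, hC, hγ⟩
  tfae_have 5 → 1 := fun h A hA => by
    obtain ⟨C, hC, hγ, hinf⟩ := exists_isGammaCover_range_of_s1 h (𝒜 := fun m => A m.unpair.1)
      fun m => (hA _).1
    refine ⟨range C, hγ, fun n => (hinf {m | m.unpair.1 = n} ?_).mono ?_⟩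
    · exact infinite_of_injective_forall_mem (f := Nat.pair n)
        (fun _ _ h => (Nat.pair_eq_pair.1 h).2) fun k => by simp
    · rintro _ ⟨m, hm, rfl⟩
      exact ⟨hm ▸ hC m, mem_range_self m⟩
  tfae_finish

/-- Theorem: for a k-Lindelöf space `X`, the properties `α₂(Ω,Γ)`, `α₃(Ω,Γ)`, `α₄(Ω,Γ)`,
`S₁(Ω,Γ)` of `(𝕂(X), V⁺)` and `S₁(𝒦,Γₖ)` of `X` are all equivalent. -/
theorem stmt13 (X : Type u) [TopologicalSpace X] [T2Space X] [Infinite X]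
    (hL : KLindelof X) :
    [Alpha2 (OmegaCovers (KSp X)) (GammaCovers (KSp X)),
     Alpha3 (OmegaCovers (KSp X)) (GammaCovers (KSp X)),
     Alpha4 (OmegaCovers (KSp X)) (GammaCovers (KSp X)),
     S1 (OmegaCovers (KSp X)) (GammaCovers (KSp X)),
     S1 (KCovers X) (GammaKCovers X)].TFAE :=
  stmt13_general X hL
end

section
/- Let X be an infinite Hausdorff ω-Lindelöf space. Then the following are equivalent: (1) (𝔽(X), V⁺) satisfies α₂(Ω,Γ); (2) (𝔽(X), V⁺) satisfies α₃(Ω,Γ); (3) (𝔽(X), V⁺) satisfies α₄(Ω,Γ); (4) (𝔽(X), V⁺) satisfies S₁(Ω,Γ); (5) X satisfies S₁(Ω,Γ). -/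
open Set Filter Pointwise

universe u

/-!
The hyperspace is handled through `U ↦ U⁺`: an ω-cover of `X` lifts to the ω-cover of `𝔽(X)` by
the sets `U⁺`, and an ω-cover `𝒞` of `𝔽(X)` yields the ω-cover of `X` by the open `U` with `U⁺`
inside a member of `𝒞`. So ω-Lindelöfness and the sequence form of `S₁(Ω,Γ)` pass from `X` up
to `𝔽(X)`, and `S₁(Ω,Γ)` passes back down.

The core is `α₄(Ω,Γ) ⇒ S₁(Ω,Γ)` for ω-Lindelöf spaces. Given ω-covers `𝒰ₙ`, shrink them to
countable ones and replace the `n`-th by the intersections `V₀ ∩ ⋯ ∩ Vₙ` with `Vᵢ ∈ 𝒰ᵢ`; enumerate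
all of these and remove the `k`-th from the covers after the `k`-th, so that each set belongs to
only finitely many covers. A γ-cover meeting infinitely many of them then gives a γ-sequence whose
`j`-th term lies in a cover of index `≥ j`, hence inside a member of `𝒰ⱼ`.
-/

open scoped SetFamily

def IsGammaSeq {Y : Type u} (u : ℕ → Set Y) : Prop :=
  ∀ F : Set Y, F.Finite → {n | ¬ F ⊆ u n}.Finite

/-- The sequence form of `S₁(Ω,Γ)`. Unlike "the range is a γ-cover", being a γ-sequence survives
enlarging the terms. -/
def S1Seq (Y : Type u) [TopologicalSpace Y] : Prop :=
  ∀ 𝒰 : ℕ → Set (Set Y), (∀ n, IsOmegaCover (𝒰 n)) →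
    ∃ u : ℕ → Set Y, (∀ n, u n ∈ 𝒰 n) ∧ IsGammaSeq u

section Selection

variable {Y : Type u} {cA cB : Set (Set Y)}

theorem Alpha2.alpha3 (h : Alpha2 cA cB) : Alpha3 cA cB := fun A hA =>
  let ⟨B, hB, hinf⟩ := h A hA
  ⟨B, hB, infinite_univ.mono fun n _ => hinf n⟩

theorem Alpha3.alpha4 (h : Alpha3 cA cB) : Alpha4 cA cB := fun A hA =>
  let ⟨B, hB, hinf⟩ := h A hA
  ⟨B, hB, hinf.mono fun _ hn => hn.nonempty⟩

theorem S1.alpha4 (h : S1 cA cB) : Alpha4 cA cB := fun A hA =>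
  let ⟨b, hb, hB⟩ := h A fun n => (hA n).1
  ⟨range b, hB, infinite_univ.mono fun n _ => ⟨b n, hb n, n, rfl⟩⟩

end Selection

namespace IsOmegaCover

variable {Y : Type u} [TopologicalSpace Y] {cU cV : Set (Set Y)}

theorem of_forall_finite_subset (ho : ∀ U ∈ cU, IsOpen U) (huniv : univ ∉ cU)
    (hfin : ∀ F : Set Y, F.Finite → ∃ U ∈ cU, F ⊆ U) : IsOmegaCover cU :=
  ⟨ho, sUnion_eq_univ_iff.2 fun x =>
    (hfin {x} (finite_singleton x)).imp fun _ ⟨hU, hxU⟩ => ⟨hU, hxU rfl⟩, huniv, hfin⟩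

theorem exists_notMem (h : IsOmegaCover cU) {U : Set Y} (hU : U ∈ cU) : ∃ x, x ∉ U := by
  by_contra! hall
  exact h.2.2.1 (eq_univ_of_forall hall ▸ hU)

theorem nonempty (h : IsOmegaCover cU) : Nonempty Y :=
  let ⟨_, hU, _⟩ := h.2.2.2 ∅ finite_empty
  let ⟨x, _⟩ := h.exists_notMem hU
  ⟨x⟩

theorem diff_finite (h : IsOmegaCover cU) {E : Set (Set Y)} (hE : E.Finite) :
    IsOmegaCover (cU \ E) := by
  have := h.nonempty
  choose! c hc using fun U (hU : U ∈ cU) => h.exists_notMem hU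
  refine of_forall_finite_subset (fun U hU => h.1 U hU.1) (fun hu => h.2.2.1 hu.1) fun F hF => ?_
  -- a member containing a point outside each member of `E` cannot belong to `E`
  obtain ⟨U, hU, hsub⟩ := h.2.2.2 (F ∪ c '' (E ∩ cU)) (hF.union ((hE.inter_of_left cU).image c))
  exact ⟨U, ⟨hU, fun hUE => hc U hU (hsub (Or.inr ⟨U, ⟨hUE, hU⟩, rfl⟩))⟩,
    subset_union_left.trans hsub⟩

theorem infinite (h : IsOmegaCover cU) : cU.Infinite := fun hfin =>
  let ⟨_, hU, _⟩ := (h.diff_finite hfin).2.2.2 ∅ finite_empty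
  hU.2 hU.1

theorem infs (hU : IsOmegaCover cU) (hV : IsOmegaCover cV) : IsOmegaCover (cU ⊼ cV) := by
  refine of_forall_finite_subset ?_ ?_ fun F hF => ?_
  · rintro _ ⟨U, hU', V, hV', rfl⟩
    exact (hU.1 U hU').inter (hV.1 V hV')
  · rintro ⟨U, hU', V, -, hUV⟩
    replace hUV : U ∩ V = univ := hUV
    exact hU.2.2.1 (eq_univ_of_univ_subset (hUV ▸ inter_subset_left) ▸ hU')
  · obtain ⟨U, hU', hFU⟩ := hU.2.2.2 F hF
    obtain ⟨V, hV', hFV⟩ := hV.2.2.2 F hF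
    exact ⟨U ∩ V, mem_image2_of_mem hU' hV', subset_inter hFU hFV⟩

end IsOmegaCover

section GammaSeq

variable {Y : Type u} {u w : ℕ → Set Y}

theorem IsGammaSeq.mono (hw : IsGammaSeq w) (hwu : ∀ n, w n ⊆ u n) : IsGammaSeq u :=
  fun F hF => (hw F hF).subset fun n hn hFw => hn (hFw.trans (hwu n))

theorem IsGammaSeq.finite_preimage_singleton (hu : IsGammaSeq u) {V : Set Y} (hV : V ≠ univ) :
    (u ⁻¹' {V}).Finite := by
  obtain ⟨x, hx⟩ := (ne_univ_iff_exists_notMem V).1 hV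
  refine (hu {x} (finite_singleton x)).subset fun n (hn : u n = V) hxu => hx ?_
  exact hn ▸ hxu rfl

theorem IsGammaSeq.range_mem_gammaCovers [TopologicalSpace Y] (hu : IsGammaSeq u)
    (ho : ∀ n, IsOpen (u n)) (hne : ∀ n, u n ≠ univ) : range u ∈ GammaCovers Y := by
  refine ⟨forall_mem_range.2 ho, sUnion_eq_univ_iff.2 fun x => ?_, fun hfin => ?_, fun F hF => ?_⟩
  · obtain ⟨n, hn⟩ := (hu {x} (finite_singleton x)).infinite_compl.nonempty
    exact ⟨u n, mem_range_self n, not_not.1 hn rfl⟩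
  · refine infinite_univ (α := ℕ) ?_
    rw [← preimage_range u]
    exact hfin.preimage' (forall_mem_range.2 fun n => hu.finite_preimage_singleton (hne n))
  · refine ((hu F hF).image u).subset ?_
    rintro _ ⟨⟨n, rfl⟩, hn⟩
    exact mem_image_of_mem u hn

end GammaSeq

section S1Seq

variable {Y : Type u} [TopologicalSpace Y]

theorem S1Seq.s1 (h : S1Seq Y) : S1 (OmegaCovers Y) (GammaCovers Y) := fun A hA =>
  let ⟨u, hu, hγ⟩ := h A hA
  ⟨u, hu, hγ.range_mem_gammaCovers (fun n => (hA n).1 _ (hu n))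
    fun n hn => (hA n).2.2.1 (hn ▸ hu n)⟩

/-- Select along `k ↦ 𝒞 k.unpair.1`: each `𝒞 n` is visited infinitely often, and a γ-sequence
repeats each set only finitely often, so it picks infinitely many members of each `𝒞 n`. -/
theorem S1Seq.alpha2 (h : S1Seq Y) : Alpha2 (OmegaCovers Y) (GammaCovers Y) := by
  intro 𝒞 h𝒞
  obtain ⟨u, hu, hγ⟩ := h (fun k => 𝒞 (Nat.unpair k).1) fun k => (h𝒞 _).1
  have hne : ∀ k, u k ≠ univ := fun k hk => (h𝒞 _).1.2.2.1 (hk ▸ hu k)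
  refine ⟨range u, hγ.range_mem_gammaCovers (fun k => (h𝒞 _).1.1 _ (hu k)) hne, fun n hfin => ?_⟩
  have hvisits : range (Nat.pair n) ⊆ u ⁻¹' (𝒞 n ∩ range u) := by
    rintro _ ⟨i, rfl⟩
    exact ⟨by simpa using hu (Nat.pair n i), mem_range_self _⟩
  refine infinite_range_of_injective (fun _ _ h => (Nat.pair_eq_pair.1 h).2)
    ((hfin.preimage' fun V hV => ?_).subset hvisits)
  obtain ⟨k, rfl⟩ := hV.2
  exact hγ.finite_preimage_singleton (hne k)

end S1Seq

section Alpha4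

variable {Y : Type u}

def iterInfs (𝒱 : ℕ → Set (Set Y)) : ℕ → Set (Set Y)
  | 0 => 𝒱 0
  | n + 1 => iterInfs 𝒱 n ⊼ 𝒱 (n + 1)

theorem countable_iterInfs {𝒱 : ℕ → Set (Set Y)} (h : ∀ n, (𝒱 n).Countable) :
    ∀ n, (iterInfs 𝒱 n).Countable
  | 0 => h 0
  | n + 1 => (countable_iterInfs h n).image2 (h (n + 1)) _

theorem exists_superset_of_mem_iterInfs {𝒱 : ℕ → Set (Set Y)} :
    ∀ {n j : ℕ} {V : Set Y}, V ∈ iterInfs 𝒱 n → j ≤ n → ∃ U ∈ 𝒱 j, V ⊆ U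
  | 0, _, V, hV, hj => ⟨V, Nat.le_zero.1 hj ▸ hV, subset_rfl⟩
  | n + 1, j, _, ⟨W, hW, U, hU, rfl⟩, hj => by
    rcases Nat.le_succ_iff.1 hj with hjn | rfl
    · obtain ⟨U', hU', hWU'⟩ := exists_superset_of_mem_iterInfs hW hjn
      exact ⟨U', hU', inter_subset_left.trans hWU'⟩
    · exact ⟨U, hU, inter_subset_right⟩

variable [TopologicalSpace Y]

theorem isOmegaCover_iterInfs {𝒱 : ℕ → Set (Set Y)} (h : ∀ n, IsOmegaCover (𝒱 n)) :
    ∀ n, IsOmegaCover (iterInfs 𝒱 n)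
  | 0 => h 0
  | n + 1 => (isOmegaCover_iterInfs h n).infs (h (n + 1))

theorem exists_omegaCovers_finite_fibers {𝒲 : ℕ → Set (Set Y)}
    (hω : ∀ n, IsOmegaCover (𝒲 n)) (hc : (⋃ n, 𝒲 n).Countable) :
    ∃ 𝒲' : ℕ → Set (Set Y), (∀ n, 𝒲' n ⊆ 𝒲 n ∧ IsOmegaCover (𝒲' n)) ∧
      ∀ V, {n | V ∈ 𝒲' n}.Finite := by
  obtain ⟨f, hf⟩ := countable_iff_exists_subset_range.1 hc
  refine ⟨fun n => 𝒲 n \ f '' Iio n,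
    fun n => ⟨sdiff_subset, (hω n).diff_finite ((finite_Iio n).image f)⟩, fun V => ?_⟩
  by_cases hV : V ∈ ⋃ n, 𝒲 n
  · obtain ⟨k, rfl⟩ := hf hV
    exact (finite_Iic k).subset fun n hn => mem_Iic.2 (not_lt.1 fun hkn => hn.2 ⟨k, hkn, rfl⟩)
  · exact finite_empty.subset fun n hn => hV (mem_iUnion.2 ⟨n, hn.1⟩)

theorem Alpha4.exists_gammaSeq_of_finite_fibers (h4 : Alpha4 (OmegaCovers Y) (GammaCovers Y))
    {𝒲 : ℕ → Set (Set Y)} (hω : ∀ n, IsOmegaCover (𝒲 n)) (hfib : ∀ V, {n | V ∈ 𝒲 n}.Finite) :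
    ∃ (N : ℕ → ℕ) (w : ℕ → Set Y), (∀ j, j ≤ N j ∧ w j ∈ 𝒲 (N j)) ∧ IsGammaSeq w := by
  obtain ⟨B, hB, hmeet⟩ := h4 𝒲 fun n => ⟨hω n, (hω n).infinite⟩
  replace hB : IsGammaCover B := hB
  choose N hN hjN using fun j => hmeet.exists_gt j
  choose w hw using hN
  refine ⟨N, w, fun j => ⟨(hjN j).le, (hw j).1⟩, fun F hF => ?_⟩
  refine ((hB.2.2.2 F hF).preimage' fun V _ => ?_).subset fun j hj => ⟨(hw j).2, hj⟩
  obtain ⟨M, hM⟩ := (hfib V).bddAbove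
  exact (finite_Iic M).subset fun j (hj : w j = V) => (hjN j).le.trans (hM (hj ▸ (hw j).1))

theorem Alpha4.s1Seq (h4 : Alpha4 (OmegaCovers Y) (GammaCovers Y)) (hL : OmegaLindelof Y) :
    S1Seq Y := by
  intro 𝒰 h𝒰
  choose 𝒱 h𝒱𝒰 h𝒱c h𝒱ω using fun n => hL (𝒰 n) (h𝒰 n)
  obtain ⟨𝒲, h𝒲, hfib⟩ := exists_omegaCovers_finite_fibers (isOmegaCover_iterInfs h𝒱ω)
    (countable_iUnion (countable_iterInfs h𝒱c))
  obtain ⟨N, w, hNw, hγ⟩ := h4.exists_gammaSeq_of_finite_fibers (fun n => (h𝒲 n).2) hfib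
  choose u hu hwu using fun j => exists_superset_of_mem_iterInfs ((h𝒲 (N j)).1 (hNw j).2) (hNw j).1
  exact ⟨u, fun j => h𝒱𝒰 j (hu j), hγ.mono hwu⟩

end Alpha4

namespace FSp

variable {X : Type u} [TopologicalSpace X]

def plus (U : Set X) : Set (FSp X) := {F | F.1 ⊆ U}

def singleton (x : X) : FSp X := ⟨{x}, finite_singleton x, singleton_nonempty x⟩

theorem singleton_mem_plus {x : X} {U : Set X} : singleton x ∈ plus U ↔ x ∈ U :=
  singleton_subset_iff

theorem plus_injective : Function.Injective (plus : Set X → Set (FSp X)) := fun U V h => by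
  ext x
  rw [← singleton_mem_plus, h, singleton_mem_plus]

theorem plus_univ : plus (univ : Set X) = univ :=
  eq_univ_of_forall fun _ => subset_univ _

theorem plus_inter (U V : Set X) : plus (U ∩ V) = plus U ∩ plus V :=
  ext fun _ => subset_inter_iff

theorem isOpen_plus {U : Set X} (hU : IsOpen U) : IsOpen (plus U) :=
  TopologicalSpace.isOpen_generateFrom_of_mem ⟨U, hU, rfl⟩

theorem isTopologicalBasis_plus :
    TopologicalSpace.IsTopologicalBasis {S : Set (FSp X) | ∃ U, IsOpen U ∧ S = plus U} where
  exists_subset_inter := by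
    rintro _ ⟨U, hU, rfl⟩ _ ⟨V, hV, rfl⟩ F hF
    exact ⟨plus (U ∩ V), ⟨U ∩ V, hU.inter hV, rfl⟩, plus_inter U V ▸ hF, (plus_inter U V).subset⟩
  sUnion_eq := eq_univ_of_univ_subset (subset_sUnion_of_mem ⟨univ, isOpen_univ, plus_univ.symm⟩)
  eq_generateFrom := rfl

theorem exists_plus_subset {S : Set (FSp X)} (hS : IsOpen S) {F : FSp X} (hF : F ∈ S) :
    ∃ U, IsOpen U ∧ F ∈ plus U ∧ plus U ⊆ S := by
  obtain ⟨_, ⟨U, hU, rfl⟩, hFU, hUS⟩ := isTopologicalBasis_plus.exists_subset_of_mem_open hF hS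
  exact ⟨U, hU, hFU, hUS⟩

theorem exists_finite_forall_subset_plus_iff {𝔉 : Set (FSp X)} (h𝔉 : 𝔉.Finite) :
    ∃ F : Set X, F.Finite ∧ ∀ U, 𝔉 ⊆ plus U ↔ F ⊆ U :=
  ⟨⋃ G ∈ 𝔉, G.1, h𝔉.biUnion fun G _ => G.2.1, fun _ => iUnion₂_subset_iff.symm⟩

theorem isOmegaCover_image_plus {cU : Set (Set X)} (h : IsOmegaCover cU) :
    IsOmegaCover (plus '' cU) := by
  refine .of_forall_finite_subset ?_ ?_ fun 𝔉 h𝔉 => ?_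
  · rintro _ ⟨U, hU, rfl⟩
    exact isOpen_plus (h.1 U hU)
  · rintro ⟨U, hU, hUuniv⟩
    exact h.2.2.1 (plus_injective (hUuniv.trans plus_univ.symm) ▸ hU)
  · obtain ⟨F, hF, hiff⟩ := exists_finite_forall_subset_plus_iff h𝔉
    obtain ⟨U, hU, hFU⟩ := h.2.2.2 F hF
    exact ⟨plus U, mem_image_of_mem plus hU, (hiff U).2 hFU⟩

theorem isGammaCover_of_image_plus {cU : Set (Set X)} (h : IsGammaCover (plus '' cU))
    (ho : ∀ U ∈ cU, IsOpen U) : IsGammaCover cU := by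
  refine ⟨ho, sUnion_eq_univ_iff.2 fun x => ?_, h.2.2.1.of_image plus, fun F hF => ?_⟩
  · obtain ⟨_, ⟨U, hU, rfl⟩, hxU⟩ := sUnion_eq_univ_iff.1 h.2.1 (singleton x)
    exact ⟨U, hU, singleton_mem_plus.1 hxU⟩
  · rcases F.eq_empty_or_nonempty with rfl | hne
    · simp
    · refine ((h.2.2.2 {⟨F, hF, hne⟩} (finite_singleton _)).preimage plus_injective.injOn).subset ?_
      exact fun U ⟨hU, hFU⟩ => ⟨mem_image_of_mem plus hU, fun h => hFU (h rfl)⟩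

def baseCover (𝒞 : Set (Set (FSp X))) : Set (Set X) :=
  {U | IsOpen U ∧ ∃ S ∈ 𝒞, plus U ⊆ S}

theorem isOmegaCover_baseCover {𝒞 : Set (Set (FSp X))} (h : IsOmegaCover 𝒞) :
    IsOmegaCover (baseCover 𝒞) := by
  obtain ⟨x₀⟩ : Nonempty X := let ⟨G⟩ := h.nonempty; ⟨G.2.2.some⟩
  refine .of_forall_finite_subset (fun U hU => hU.1) ?_ fun F hF => ?_
  · rintro ⟨-, S, hS, hSuniv⟩
    exact h.2.2.1 (univ_subset_iff.1 (plus_univ (X := X) ▸ hSuniv) ▸ hS)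
  · obtain ⟨S, hS, hGS⟩ := h.2.2.2 {⟨insert x₀ F, hF.insert x₀, insert_nonempty x₀ F⟩}
      (finite_singleton _)
    obtain ⟨U, hU, hGU, hUS⟩ := exists_plus_subset (h.1 S hS) (hGS rfl)
    exact ⟨U, ⟨hU, S, hS, hUS⟩, (subset_insert x₀ F).trans hGU⟩

end FSp

open FSp

section Hyperspace

variable {X : Type u} [TopologicalSpace X]

theorem OmegaLindelof.fSp (hL : OmegaLindelof X) :
    OmegaLindelof (FSp X) := by
  intro (𝒞 : Set (Set (FSp X))) h𝒞
  obtain ⟨𝒱, h𝒱, h𝒱c, h𝒱ω⟩ := hL (baseCover 𝒞) (isOmegaCover_baseCover h𝒞)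
  choose! c hc hUc using fun (U : Set X) (hU : U ∈ 𝒱) => (h𝒱 hU).2
  have hsub : c '' 𝒱 ⊆ 𝒞 := image_subset_iff.2 hc
  refine ⟨c '' 𝒱, hsub, h𝒱c.image c, .of_forall_finite_subset (fun S hS => h𝒞.1 S (hsub hS))
    (fun hu => h𝒞.2.2.1 (hsub hu)) fun 𝔉 h𝔉 => ?_⟩
  obtain ⟨F, hF, hiff⟩ := exists_finite_forall_subset_plus_iff h𝔉
  obtain ⟨U, hU, hFU⟩ := h𝒱ω.2.2.2 F hF
  exact ⟨c U, mem_image_of_mem c hU, ((hiff U).2 hFU).trans (hUc U hU)⟩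

theorem S1Seq.fSp (h : S1Seq X) : S1Seq (FSp X) := by
  intro (𝒞 : ℕ → Set (Set (FSp X))) h𝒞
  obtain ⟨u, hu, hγ⟩ := h (fun n => baseCover (𝒞 n)) fun n => isOmegaCover_baseCover (h𝒞 n)
  choose S hS huS using fun n => (hu n).2
  refine ⟨S, hS, fun 𝔉 h𝔉 => ?_⟩
  obtain ⟨F, hF, hiff⟩ := exists_finite_forall_subset_plus_iff h𝔉
  exact (hγ F hF).subset fun n hn hFu => hn (((hiff (u n)).2 hFu).trans (huS n))

theorem S1.of_fSp (h : S1 (OmegaCovers (FSp X)) (GammaCovers (FSp X))) :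
    S1 (OmegaCovers X) (GammaCovers X) := by
  intro A hA
  obtain ⟨b, hb, hγ⟩ := h (fun n => plus '' A n) fun n => isOmegaCover_image_plus (hA n)
  choose v hv hvb using hb
  obtain rfl : b = plus ∘ v := funext fun n => (hvb n).symm
  refine ⟨v, hv, isGammaCover_of_image_plus ?_ (forall_mem_range.2 fun n => (hA n).1 _ (hv n))⟩
  rwa [← range_comp]

end Hyperspace

theorem stmt14_general (X : Type u) [TopologicalSpace X]
    (hL : OmegaLindelof X) :
    [Alpha2 (OmegaCovers (FSp X)) (GammaCovers (FSp X)),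
     Alpha3 (OmegaCovers (FSp X)) (GammaCovers (FSp X)),
     Alpha4 (OmegaCovers (FSp X)) (GammaCovers (FSp X)),
     S1 (OmegaCovers (FSp X)) (GammaCovers (FSp X)),
     S1 (OmegaCovers X) (GammaCovers X)].TFAE := by
  tfae_have 1 → 2 := Alpha2.alpha3
  tfae_have 2 → 3 := Alpha3.alpha4
  tfae_have 3 → 4 := fun h => (h.s1Seq hL.fSp).s1
  tfae_have 4 → 5 := S1.of_fSp
  tfae_have 5 → 1 := fun h => (h.alpha4.s1Seq hL).fSp.alpha2
  tfae_finish

/-- Theorem: for an ω-Lindelöf space `X`, the properties `α₂(Ω,Γ)`, `α₃(Ω,Γ)`, `α₄(Ω,Γ)`,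
`S₁(Ω,Γ)` of `(𝔽(X), V⁺)` and `S₁(Ω,Γ)` of `X` are all equivalent. -/
theorem stmt14 (X : Type u) [TopologicalSpace X] [T2Space X] [Infinite X]
    (hL : OmegaLindelof X) :
    [Alpha2 (OmegaCovers (FSp X)) (GammaCovers (FSp X)),
     Alpha3 (OmegaCovers (FSp X)) (GammaCovers (FSp X)),
     Alpha4 (OmegaCovers (FSp X)) (GammaCovers (FSp X)),
     S1 (OmegaCovers (FSp X)) (GammaCovers (FSp X)),
     S1 (OmegaCovers X) (GammaCovers X)].TFAE :=
  stmt14_general X hL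
end

section
/- Let X be an infinite Hausdorff space. If 𝒰 is a k-cover of X, then the family 𝒰⁺ = {U⁺ : U ∈ 𝒰} is an ω-cover of (𝕂(X), V⁺). -/
open Set Filter Pointwise

universe u

/-- If `𝒰` is a k-cover of `X`, then `𝒰⁺ = {U⁺ : U ∈ 𝒰}` is an ω-cover of `(𝕂(X), V⁺)`. -/
theorem stmt16 (X : Type u) [TopologicalSpace X] [T2Space X] [Infinite X]
    (cU : Set (Set X)) (hU : IsKCover cU) :
    IsOmegaCover {V : Set (KSp X) | ∃ U ∈ cU, V = {K : KSp X | K.1 ⊆ U}} := by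
  obtain ⟨hopen, hcov, hne, hk⟩ := hU
  refine ⟨?_, ?_, ?_, ?_⟩
  · rintro V ⟨U, hUm, rfl⟩
    exact TopologicalSpace.GenerateOpen.basic _ ⟨U, hopen U hUm, rfl⟩
  · ext K
    simp only [Set.mem_sUnion, Set.mem_univ, iff_true]
    obtain ⟨U, hUm, hKU⟩ := hk K.1 K.2.1
    exact ⟨_, ⟨U, hUm, rfl⟩, hKU⟩
  · rintro ⟨U, hUm, hVeq⟩
    apply hne
    have hUuniv : U = Set.univ := by
      ext x
      simp only [Set.mem_univ, iff_true]
      have hmem : (⟨{x}, isCompact_singleton, Set.singleton_nonempty x⟩ : KSp X)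
          ∈ (Set.univ : Set (KSp X)) := Set.mem_univ _
      rw [hVeq] at hmem
      exact hmem (Set.mem_singleton x)
    rwa [hUuniv] at hUm
  · intro F hF
    by_cases hFne : F.Nonempty
    · have hcpt : IsCompact (⋃ K ∈ F, (K : KSp X).1) := by
        exact hF.isCompact_biUnion (fun K _ => K.2.1)
      obtain ⟨U, hUm, hKU⟩ := hk _ hcpt
      refine ⟨_, ⟨U, hUm, rfl⟩, ?_⟩
      intro K hKF
      exact fun x hx => hKU (Set.mem_biUnion hKF hx)
    · have : ∃ U, U ∈ cU := by
        obtain ⟨x⟩ := (inferInstance : Nonempty X)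
        have : x ∈ ⋃₀ cU := hcov ▸ Set.mem_univ x
        obtain ⟨U, hUm, _⟩ := this
        exact ⟨U, hUm⟩
      obtain ⟨U, hUm⟩ := this
      exact ⟨_, ⟨U, hUm, rfl⟩, by simp [Set.not_nonempty_iff_eq_empty.mp hFne]⟩
end
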